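/- Let f : ℝ^d × ℝ^d → ℝ be a continuously differentiable, globally Lipschitz function. Then for every t > 0 and every (p,ξ) ∈ ℝ^d × ℝ^d, the function P_t f is differentiable in ξ and ‖∇_ξ P_t f(p,ξ)‖² ≤ P_t(‖∇_ξ f‖²)(p,ξ). -/

import Mathlib

open MeasureTheory Real
open scoped RealInnerProductSpace NNReal

noncomputable section

abbrev Ed (d : ℕ) : Type := EuclideanSpace ℝ (Fin d)

/-- Density of the Gaussian law of `(B_t, ∫_0^t B_s ds)` for a `d`-dimensional
Brownian motion with variance `σ²`. -/
def kolDensity (d : ℕ) (σ t : ℝ) (z : Ed d × Ed d) : ℝ :=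
  ∏ i : Fin d, (Real.sqrt 3 / (Real.pi * σ ^ 2 * t ^ 2)) *
    Real.exp (-(2 / σ ^ 2) *
      ((z.1 i) ^ 2 / t - 3 * z.1 i * z.2 i / t ^ 2 + 3 * (z.2 i) ^ 2 / t ^ 3))

/-- The Kolmogorov semigroup `P_t`. -/
def kolP (d : ℕ) (σ t : ℝ) (f : Ed d × Ed d → ℝ) (x : Ed d × Ed d) : ℝ :=
  if t = 0 then f x
  else ∫ z : Ed d × Ed d, f (x.1 + z.1, x.2 + t • x.1 + z.2) * kolDensity d σ t z

/-- Partial derivative in the variable `p_i`. -/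
def dP (d : ℕ) (i : Fin d) (f : Ed d × Ed d → ℝ) (x : Ed d × Ed d) : ℝ :=
  fderiv ℝ f x ((EuclideanSpace.single i 1 : Ed d), (0 : Ed d))

/-- Partial derivative in the variable `ξ_i`. -/
def dXi (d : ℕ) (i : Fin d) (f : Ed d × Ed d → ℝ) (x : Ed d × Ed d) : ℝ :=
  fderiv ℝ f x ((0 : Ed d), (EuclideanSpace.single i 1 : Ed d))

/-- Gradient in the `p` variable. -/
def gradP (d : ℕ) (f : Ed d × Ed d → ℝ) (x : Ed d × Ed d) : Ed d :=
  gradient (fun p => f (p, x.2)) x.1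

/-- Gradient in the `ξ` variable. -/
def gradXi (d : ℕ) (f : Ed d × Ed d → ℝ) (x : Ed d × Ed d) : Ed d :=
  gradient (fun ξ => f (x.1, ξ)) x.2


/-!
With `y = (p, ξ + t • p)` one has `P_t f (p, ξ') = ∫ f (y + (0, ξ' - ξ) + z) ρ_t(z) dz`, so `ξ`
enters only through a translation. The density `ρ_t` factors over the coordinates into
two-dimensional Gaussians; hence it is a probability density with finite first moment, and as `f`
is Lipschitz one may differentiate under the integral:
`∇_ξ P_t f (p, ξ) = ∫ ∇_ξ f (y + z) ρ_t(z) dz`. The estimate is then Jensen's inequality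
`(∫ h ρ_t)² ≤ ∫ h² ρ_t` for `h = ‖∇_ξ f (y + ·)‖`.
-/

theorem sq_integral_mul_le_integral_sq_mul {α : Type*} [MeasurableSpace α] {μ : Measure α}
    {ρ h : α → ℝ} (hρ : ∀ a, 0 ≤ ρ a) (hρ1 : ∫ a, ρ a ∂μ = 1)
    (hh : Integrable (fun a => h a * ρ a) μ) (hh2 : Integrable (fun a => h a ^ 2 * ρ a) μ) :
    (∫ a, h a * ρ a ∂μ) ^ 2 ≤ ∫ a, h a ^ 2 * ρ a ∂μ := by
  set m := ∫ a, h a * ρ a ∂μ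
  have hρi : Integrable ρ μ := .of_integral_ne_zero (by simp [hρ1])
  have hvar : 0 ≤ ∫ a, (h a - m) ^ 2 * ρ a ∂μ :=
    integral_nonneg fun a => mul_nonneg (sq_nonneg _) (hρ a)
  have hexpand : ∫ a, (h a - m) ^ 2 * ρ a ∂μ = (∫ a, h a ^ 2 * ρ a ∂μ) - m ^ 2 := by
    have hsplit : (fun a => (h a - m) ^ 2 * ρ a) =
        fun a => (h a ^ 2 * ρ a - 2 * m * (h a * ρ a)) + m ^ 2 * ρ a := by
      funext a; ring
    have hcross : Integrable (fun a => h a ^ 2 * ρ a - 2 * m * (h a * ρ a)) μ :=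
      hh2.sub (hh.const_mul _)
    rw [hsplit, integral_add hcross (hρi.const_mul _), integral_sub hh2 (hh.const_mul _),
      integral_const_mul, integral_const_mul, hρ1]
    ring
  linarith

theorem Finset.one_add_sum_le_prod_one_add {ι : Type*} (s : Finset ι) {a : ι → ℝ}
    (ha : ∀ i ∈ s, 0 ≤ a i) : 1 + ∑ i ∈ s, a i ≤ ∏ i ∈ s, (1 + a i) := by
  classical
  induction s using Finset.induction_on with
  | empty => simp
  | insert j s hj ih =>
    rw [Finset.sum_insert hj, Finset.prod_insert hj]
    have ha' : ∀ i ∈ s, 0 ≤ a i := fun i hi => ha i (Finset.mem_insert_of_mem hi)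
    have hsum : 0 ≤ ∑ i ∈ s, a i := Finset.sum_nonneg ha'
    have haj : 0 ≤ a j := ha j (Finset.mem_insert_self j s)
    calc 1 + (a j + ∑ i ∈ s, a i) ≤ (1 + a j) * (1 + ∑ i ∈ s, a i) := by nlinarith
      _ ≤ (1 + a j) * ∏ i ∈ s, (1 + a i) := by gcongr; exact ih ha'

theorem EuclideanSpace.norm_le_sum_abs {ι : Type*} [Fintype ι] (x : EuclideanSpace ℝ ι) :
    ‖x‖ ≤ ∑ i, |x i| := by
  rw [EuclideanSpace.norm_eq]
  refine Real.sqrt_le_iff.2 ⟨Finset.sum_nonneg fun i _ => abs_nonneg _, ?_⟩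
  simpa [Real.norm_eq_abs] using
    Finset.sum_sq_le_sq_sum_of_nonneg (s := Finset.univ) (fun i _ => abs_nonneg (x i))

theorem integrable_one_add_abs_mul_exp_neg_mul_sq {b : ℝ} (hb : 0 < b) :
    Integrable (fun x : ℝ => (1 + |x|) * Real.exp (-b * x ^ 2)) := by
  have habs : Integrable (fun x : ℝ => |x| * Real.exp (-b * x ^ 2)) := by
    refine (integrable_mul_exp_neg_mul_sq hb).abs.congr (ae_of_all _ fun x => ?_)
    simp [abs_mul]
  refine ((integrable_exp_neg_mul_sq hb).add habs).congr (ae_of_all _ fun x => ?_)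
  simp only [Pi.add_apply]
  ring

theorem HasFDerivAt.norm_gradient {F : Type*} [NormedAddCommGroup F] [InnerProductSpace ℝ F]
    [CompleteSpace F] {g : F → ℝ} {L : F →L[ℝ] ℝ} {x : F} (h : HasFDerivAt g L x) :
    ‖gradient g x‖ = ‖L‖ := by
  rw [gradient, h.fderiv, LinearIsometryEquiv.norm_map]

section DifferentiationUnderIntegral

variable {E : Type*} [NormedAddCommGroup E] [MeasurableSpace E] [BorelSpace E] {μ : Measure E}
  {f : E → ℝ} {K : ℝ≥0} {ρ : E → ℝ}

theorem LipschitzWith.integrable_comp_add_mul (hf : LipschitzWith K f)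
    (hρ : Integrable ρ μ) (hρ1 : Integrable (fun z => ‖z‖ * ρ z) μ) (x : E) :
    Integrable (fun z => f (x + z) * ρ z) μ := by
  refine ((hρ.norm.const_mul |f x|).add (hρ1.norm.const_mul K)).mono'
    ((hf.continuous.comp (continuous_const_add x)).aestronglyMeasurable.mul
      hρ.aestronglyMeasurable) (ae_of_all _ fun z => ?_)
  have hgrowth : |f (x + z)| ≤ |f x| + K * ‖z‖ := by
    have hlip := hf.norm_sub_le (x + z) x
    rw [add_sub_cancel_left, Real.norm_eq_abs] at hlip
    linarith [abs_sub_abs_le_abs_sub (f (x + z)) (f x)]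
  simp only [norm_mul, Real.norm_eq_abs, abs_norm, Pi.add_apply]
  nlinarith [abs_nonneg (ρ z), norm_nonneg z]

variable [NormedSpace ℝ E] [FiniteDimensional ℝ E]

theorem hasFDerivAt_integral_comp_add_mul (hfd : Differentiable ℝ f) (hf : LipschitzWith K f)
    (hρ : Integrable ρ μ) (hρ1 : Integrable (fun z => ‖z‖ * ρ z) μ) (x : E) :
    Integrable (fun z => ρ z • fderiv ℝ f (x + z)) μ ∧
      HasFDerivAt (fun v => ∫ z, f (v + z) * ρ z ∂μ) (∫ z, ρ z • fderiv ℝ f (x + z) ∂μ) x := by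
  refine hasFDerivAt_integral_of_dominated_loc_of_lip' (s := Set.univ)
    (bound := fun z => K * ‖ρ z‖) Filter.univ_mem
    (fun v _ => (hf.integrable_comp_add_mul hρ hρ1 v).aestronglyMeasurable)
    (hf.integrable_comp_add_mul hρ hρ1 x)
    (hρ.aestronglyMeasurable.smul
      ((measurable_fderiv ℝ f).comp (measurable_const_add x)).aestronglyMeasurable)
    (ae_of_all _ fun z v _ => ?_) (hρ.norm.const_mul _) (ae_of_all _ fun z => ?_)
  · rw [← sub_mul, norm_mul, mul_right_comm]
    gcongr
    simpa using hf.norm_sub_le (v + z) (x + z)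
  · exact ((hfd (x + z)).hasFDerivAt.comp x ((hasFDerivAt_id x).add_const z)).mul_const (ρ z)

end DifferentiationUnderIntegral

namespace Kolmogorov

variable {d : ℕ} {σ t : ℝ}

def pairDensity (σ t : ℝ) (w : ℝ × ℝ) : ℝ :=
  Real.sqrt 3 / (Real.pi * σ ^ 2 * t ^ 2) *
    Real.exp (-(2 / σ ^ 2) * (w.1 ^ 2 / t - 3 * w.1 * w.2 / t ^ 2 + 3 * w.2 ^ 2 / t ^ 3))

theorem pairDensity_nonneg (w : ℝ × ℝ) : 0 ≤ pairDensity σ t w := by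
  unfold pairDensity; positivity

@[fun_prop]
theorem continuous_pairDensity : Continuous (pairDensity σ t) := by
  unfold pairDensity; fun_prop

theorem pairDensity_eq (hσ : σ ≠ 0) (ht : t ≠ 0) (w : ℝ × ℝ) :
    pairDensity σ t w = Real.sqrt 3 / (Real.pi * σ ^ 2 * t ^ 2) *
      (Real.exp (-(1 / (2 * σ ^ 2 * t)) * w.1 ^ 2) *
        Real.exp (-(6 / (σ ^ 2 * t ^ 3)) * (w.2 - t / 2 * w.1) ^ 2)) := by
  rw [pairDensity, ← Real.exp_add]
  congr 2
  field_simp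
  ring

theorem pairDensity_le (hσ : 0 < σ) (ht : 0 < t) (w : ℝ × ℝ) :
    pairDensity σ t w ≤ Real.sqrt 3 / (Real.pi * σ ^ 2 * t ^ 2) *
      (Real.exp (-(2 / (7 * σ ^ 2 * t)) * w.1 ^ 2) *
        Real.exp (-(3 / (4 * σ ^ 2 * t ^ 3)) * w.2 ^ 2)) := by
  rw [pairDensity, ← Real.exp_add]
  gcongr ?_ * Real.exp ?_
  -- the constants are chosen so that the quadratic form exceeds its diagonal part
  -- `x² / (7 t) + 3 y² / (8 t³)` by a perfect square
  have hsq : w.1 ^ 2 / t - 3 * w.1 * w.2 / t ^ 2 + 3 * w.2 ^ 2 / t ^ 3 =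
      w.1 ^ 2 / (7 * t) + 3 * w.2 ^ 2 / (8 * t ^ 3) +
        6 / (7 * t ^ 3) * (t * w.1 - 7 / 4 * w.2) ^ 2 := by
    field_simp
    ring
  have hrem : 0 ≤ 2 / σ ^ 2 * (6 / (7 * t ^ 3) * (t * w.1 - 7 / 4 * w.2) ^ 2) := by positivity
  have hdiag : -(2 / (7 * σ ^ 2 * t)) * w.1 ^ 2 + -(3 / (4 * σ ^ 2 * t ^ 3)) * w.2 ^ 2 =
      -(2 / σ ^ 2) * (w.1 ^ 2 / (7 * t) + 3 * w.2 ^ 2 / (8 * t ^ 3)) := by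
    field_simp
    ring
  rw [hsq, hdiag]
  nlinarith

theorem integrable_one_add_abs_mul_one_add_abs_mul_pairDensity (hσ : 0 < σ) (ht : 0 < t) :
    Integrable (fun w : ℝ × ℝ => (1 + |w.1|) * (1 + |w.2|) * pairDensity σ t w) := by
  have hdom : Integrable (fun w : ℝ × ℝ =>
      (Real.sqrt 3 / (Real.pi * σ ^ 2 * t ^ 2) *
        ((1 + |w.1|) * Real.exp (-(2 / (7 * σ ^ 2 * t)) * w.1 ^ 2))) *
        ((1 + |w.2|) * Real.exp (-(3 / (4 * σ ^ 2 * t ^ 3)) * w.2 ^ 2))) := by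
    rw [Measure.volume_eq_prod]
    exact Integrable.mul_prod
      ((integrable_one_add_abs_mul_exp_neg_mul_sq (by positivity)).const_mul _)
      (integrable_one_add_abs_mul_exp_neg_mul_sq (by positivity))
  refine hdom.mono' (Continuous.aestronglyMeasurable (by fun_prop))
    (ae_of_all _ fun w => ?_)
  rw [Real.norm_of_nonneg (by have := pairDensity_nonneg (σ := σ) (t := t) w; positivity)]
  calc (1 + |w.1|) * (1 + |w.2|) * pairDensity σ t w
      ≤ (1 + |w.1|) * (1 + |w.2|) * (Real.sqrt 3 / (Real.pi * σ ^ 2 * t ^ 2) *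
          (Real.exp (-(2 / (7 * σ ^ 2 * t)) * w.1 ^ 2) *
            Real.exp (-(3 / (4 * σ ^ 2 * t ^ 3)) * w.2 ^ 2))) := by
        gcongr
        exact pairDensity_le hσ ht w
    _ = _ := by ring

theorem integrable_pairDensity (hσ : 0 < σ) (ht : 0 < t) : Integrable (pairDensity σ t) := by
  refine (integrable_one_add_abs_mul_one_add_abs_mul_pairDensity hσ ht).mono'
    continuous_pairDensity.aestronglyMeasurable (ae_of_all _ fun w => ?_)
  rw [Real.norm_of_nonneg (pairDensity_nonneg w)]
  have hweight : 1 ≤ (1 + |w.1|) * (1 + |w.2|) := by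
    nlinarith [abs_nonneg w.1, abs_nonneg w.2]
  nlinarith [pairDensity_nonneg (σ := σ) (t := t) w]

theorem integral_pairDensity_mk (hσ : 0 < σ) (ht : 0 < t) (x : ℝ) :
    ∫ y, pairDensity σ t (x, y) = Real.sqrt 3 / (Real.pi * σ ^ 2 * t ^ 2) *
      Real.exp (-(1 / (2 * σ ^ 2 * t)) * x ^ 2) * Real.sqrt (Real.pi * σ ^ 2 * t ^ 3 / 6) := by
  simp_rw [pairDensity_eq hσ.ne' ht.ne' (_, _), ← mul_assoc]
  rw [integral_const_mul]
  congr 1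
  rw [integral_sub_right_eq_self (fun y => Real.exp (-(6 / (σ ^ 2 * t ^ 3)) * y ^ 2))
    (t / 2 * x), integral_gaussian]
  congr 1
  field_simp

theorem integral_pairDensity (hσ : 0 < σ) (ht : 0 < t) : ∫ w, pairDensity σ t w = 1 := by
  have hint := integrable_pairDensity hσ ht
  rw [Measure.volume_eq_prod] at hint ⊢
  rw [integral_prod _ hint]
  simp_rw [integral_pairDensity_mk hσ ht]
  rw [integral_mul_const, integral_const_mul, integral_gaussian, mul_assoc,
    ← Real.sqrt_mul (by positivity)]
  have hprod : Real.pi / (1 / (2 * σ ^ 2 * t)) * (Real.pi * σ ^ 2 * t ^ 3 / 6)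
      = (Real.pi * σ ^ 2 * t ^ 2 / Real.sqrt 3) ^ 2 := by
    rw [div_pow, Real.sq_sqrt (by norm_num)]
    field_simp
    ring
  rw [hprod, Real.sqrt_sq (by positivity)]
  field_simp

def pairEquiv (d : ℕ) : (Fin d → ℝ × ℝ) ≃ᵐ Ed d × Ed d :=
  (MeasurableEquiv.arrowProdEquivProdArrow ℝ ℝ (Fin d)).trans
    ((MeasurableEquiv.toLp 2 (Fin d → ℝ)).prodCongr (MeasurableEquiv.toLp 2 (Fin d → ℝ)))

theorem measurePreserving_pairEquiv : MeasurePreserving (pairEquiv d) := by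
  have hLp := (EuclideanSpace.volume_preserving_symm_measurableEquiv_toLp (Fin d)).symm
  exact (hLp.prod hLp).comp (volume_measurePreserving_arrowProdEquivProdArrow ℝ ℝ (Fin d))

theorem kolDensity_pairEquiv (w : Fin d → ℝ × ℝ) :
    kolDensity d σ t (pairEquiv d w) = ∏ i, pairDensity σ t (w i) := rfl

theorem kolDensity_nonneg (z : Ed d × Ed d) : 0 ≤ kolDensity d σ t z :=
  Finset.prod_nonneg fun i _ => by positivity

theorem integral_kolDensity (hσ : 0 < σ) (ht : 0 < t) : ∫ z, kolDensity d σ t z = 1 := by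
  rw [← (measurePreserving_pairEquiv (d := d)).integral_comp' (kolDensity d σ t)]
  simp [kolDensity_pairEquiv, integral_fintype_prod_volume_eq_prod, integral_pairDensity hσ ht]

theorem integrable_kolDensity (hσ : 0 < σ) (ht : 0 < t) : Integrable (kolDensity d σ t) :=
  .of_integral_ne_zero (by simp [integral_kolDensity hσ ht])

theorem norm_pairEquiv_le (w : Fin d → ℝ × ℝ) :
    ‖pairEquiv d w‖ ≤ ∏ i, (1 + |(w i).1|) * (1 + |(w i).2|) := by
  have hcoord : ∀ i, (1 + |(w i).1|) * (1 + |(w i).2|) =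
      1 + (|(w i).1| + |(w i).2| + |(w i).1| * |(w i).2|) := fun i => by ring
  simp_rw [hcoord]
  refine le_trans ?_ (Finset.one_add_sum_le_prod_one_add _ fun i _ => by positivity)
  have hfst : ‖(pairEquiv d w).1‖ ≤ ∑ i, |(w i).1| := EuclideanSpace.norm_le_sum_abs _
  have hsnd : ‖(pairEquiv d w).2‖ ≤ ∑ i, |(w i).2| := EuclideanSpace.norm_le_sum_abs _
  have hcross : 0 ≤ ∑ i, |(w i).1| * |(w i).2| := by positivity
  rw [Prod.norm_def, Finset.sum_add_distrib, Finset.sum_add_distrib]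
  linarith [max_le_add_of_nonneg (norm_nonneg (pairEquiv d w).1) (norm_nonneg (pairEquiv d w).2)]

theorem integrable_norm_mul_kolDensity (hσ : 0 < σ) (ht : 0 < t) :
    Integrable (fun z : Ed d × Ed d => ‖z‖ * kolDensity d σ t z) := by
  rw [← (measurePreserving_pairEquiv (d := d)).integrable_comp_emb
    (pairEquiv d).measurableEmbedding]
  have hdom : Integrable (fun w : Fin d → ℝ × ℝ =>
      ∏ i, (1 + |(w i).1|) * (1 + |(w i).2|) * pairDensity σ t (w i)) :=
    Integrable.fintype_prod fun _ =>
      integrable_one_add_abs_mul_one_add_abs_mul_pairDensity hσ ht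
  refine hdom.mono' ?_ (ae_of_all _ fun w => ?_)
  · simp only [Function.comp_def, kolDensity_pairEquiv]
    exact ((measurable_norm.comp (pairEquiv d).measurable).mul
      (Finset.measurable_prod _ fun i _ =>
        continuous_pairDensity.measurable.comp (measurable_pi_apply i))).aestronglyMeasurable
  · have hρ : 0 ≤ ∏ i, pairDensity σ t (w i) :=
      Finset.prod_nonneg fun i _ => pairDensity_nonneg _
    rw [Function.comp_apply, kolDensity_pairEquiv, Finset.prod_mul_distrib,
      Real.norm_of_nonneg (by positivity)]
    exact mul_le_mul_of_nonneg_right (norm_pairEquiv_le w) hρ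

theorem kolP_eq_integral (ht : t ≠ 0) (g : Ed d × Ed d → ℝ) (x : Ed d × Ed d) :
    kolP d σ t g x = ∫ z, g ((x.1, x.2 + t • x.1) + z) * kolDensity d σ t z := by
  rw [kolP, if_neg ht]
  rfl

variable {f : Ed d × Ed d → ℝ}

theorem norm_gradXi_eq {x : Ed d × Ed d} (hf : DifferentiableAt ℝ f x) :
    ‖gradXi d f x‖ = ‖(fderiv ℝ f x).comp (ContinuousLinearMap.inr ℝ (Ed d) (Ed d))‖ :=
  (hf.hasFDerivAt.comp x.2 (hasFDerivAt_prodMk_right x.1 x.2)).norm_gradient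

theorem norm_gradXi_le {K : ℝ≥0} (hf : LipschitzWith K f) (x : Ed d × Ed d) :
    ‖gradXi d f x‖ ≤ K := by
  rw [gradXi, gradient, LinearIsometryEquiv.norm_map]
  simpa [Function.comp_def] using
    norm_fderiv_le_of_lipschitz ℝ (hf.comp (LipschitzWith.prodMk_left x.1))

theorem continuous_norm_gradXi (hf : ContDiff ℝ 1 f) : Continuous fun x => ‖gradXi d f x‖ := by
  simp_rw [norm_gradXi_eq (hf.differentiable one_ne_zero _)]
  exact ((hf.continuous_fderiv one_ne_zero).clm_comp continuous_const).norm

theorem hasFDerivAt_kolP_slice (hσ : 0 < σ) (ht : 0 < t) (hfd : Differentiable ℝ f) {K : ℝ≥0}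
    (hf : LipschitzWith K f) (p ξ : Ed d) :
    HasFDerivAt (fun ξ' => kolP d σ t f (p, ξ'))
      (∫ z, kolDensity d σ t z •
        (fderiv ℝ f ((p, ξ + t • p) + z)).comp (ContinuousLinearMap.inr ℝ (Ed d) (Ed d))) ξ := by
  obtain ⟨hint, hderiv⟩ := hasFDerivAt_integral_comp_add_mul hfd hf
    (integrable_kolDensity hσ ht) (integrable_norm_mul_kolDensity hσ ht) (p, ξ + t • p)
  have hshear : HasFDerivAt (fun ξ' : Ed d => (p, ξ' + t • p))
      (ContinuousLinearMap.inr ℝ (Ed d) (Ed d)) ξ :=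
    (hasFDerivAt_const p ξ).prodMk ((hasFDerivAt_id ξ).add_const (t • p))
  have hcomp := ((ContinuousLinearMap.compL ℝ (Ed d) (Ed d × Ed d) ℝ).flip
    (ContinuousLinearMap.inr ℝ (Ed d) (Ed d))).integral_comp_comm hint
  simp only [ContinuousLinearMap.flip_apply, ContinuousLinearMap.compL_apply,
    ContinuousLinearMap.smul_comp] at hcomp
  simp_rw [kolP_eq_integral ht.ne']
  rw [hcomp]
  exact hderiv.comp ξ hshear

theorem norm_integral_kolDensity_smul_le (hfd : Differentiable ℝ f) (y : Ed d × Ed d) :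
    ‖∫ z, kolDensity d σ t z •
        (fderiv ℝ f (y + z)).comp (ContinuousLinearMap.inr ℝ (Ed d) (Ed d))‖ ≤
      ∫ z, ‖gradXi d f (y + z)‖ * kolDensity d σ t z := by
  refine (norm_integral_le_integral_norm _).trans_eq (integral_congr_ae (ae_of_all _ fun z => ?_))
  dsimp only
  rw [norm_smul, ← norm_gradXi_eq (hfd _), Real.norm_of_nonneg (kolDensity_nonneg z), mul_comm]

end Kolmogorov

open Kolmogorov in
theorem kolmogorov_gradXi_bound (d : ℕ) (σ : ℝ) (hσ : 0 < σ)
    (f : Ed d × Ed d → ℝ) (hf : ContDiff ℝ 1 f) (K : ℝ≥0) (hLip : LipschitzWith K f)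
    (t : ℝ) (ht : 0 < t) (p ξ : Ed d) :
    DifferentiableAt ℝ (fun ξ' => kolP d σ t f (p, ξ')) ξ ∧
    ‖gradient (fun ξ' => kolP d σ t f (p, ξ')) ξ‖ ^ 2 ≤
      kolP d σ t (fun x => ‖gradXi d f x‖ ^ 2) (p, ξ) := by
  have hfd : Differentiable ℝ f := hf.differentiable one_ne_zero
  have hderiv := hasFDerivAt_kolP_slice hσ ht hfd hLip p ξ
  refine ⟨hderiv.differentiableAt, ?_⟩
  set h : Ed d × Ed d → ℝ := fun z => ‖gradXi d f ((p, ξ + t • p) + z)‖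
  have hmeas : AEStronglyMeasurable h :=
    ((continuous_norm_gradXi hf).comp (continuous_const_add _)).aestronglyMeasurable
  have hbound : ∀ z, ‖h z‖ ≤ K := fun z => by
    rw [norm_norm]; exact norm_gradXi_le hLip _
  have hbound_sq : ∀ z, ‖h z ^ 2‖ ≤ K ^ 2 := fun z => by
    rw [norm_pow]; exact pow_le_pow_left₀ (norm_nonneg _) (hbound z) 2
  calc ‖gradient (fun ξ' => kolP d σ t f (p, ξ')) ξ‖ ^ 2
      ≤ (∫ z, h z * kolDensity d σ t z) ^ 2 := by
        rw [hderiv.norm_gradient]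
        gcongr
        exact norm_integral_kolDensity_smul_le hfd _
    _ ≤ ∫ z, h z ^ 2 * kolDensity d σ t z :=
        sq_integral_mul_le_integral_sq_mul kolDensity_nonneg (integral_kolDensity hσ ht)
          ((integrable_kolDensity hσ ht).bdd_mul hmeas (ae_of_all _ hbound))
          ((integrable_kolDensity hσ ht).bdd_mul (hmeas.pow 2) (ae_of_all _ hbound_sq))
    _ = kolP d σ t (fun x => ‖gradXi d f x‖ ^ 2) (p, ξ) := by
        rw [kolP_eq_integral ht.ne']
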